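/- Let d = 2m be even with d ≥ 4, and let −γ denote the complex generated by {τ_{m+1}^k : m ≤ k ≤ d−1}. Then the simplicial complex (⋃_{k=0}^{m} Γ_k) ∪ (−γ) is shellable: appending the facets τ_{m+1}^m, τ_{m+1}^{m+1}, …, τ_{m+1}^{d−1} (in this order) to the shelling order τ_0, τ_1^1, …, τ_1^d, …, τ_m^1, …, τ_m^d of ⋃_{k=0}^{m} Γ_k gives a shelling, where for m ≤ k ≤ d−1 a face G ⊆ τ_{m+1}^k is contained in some earlier facet of the list if and only if {y_k, y_{k+m}} ⊄ G. -/
import Mathlib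


namespace SpherePaper

/-- Vertices of `∂C_d^*`: `(i, false)` plays the role of `x_i` and `(i, true)` of `y_i`,
with the cyclic index convention `x_{d+k} = x_k` built in via `ZMod d`. -/
abbrev Vtx (d : ℕ) := ZMod d × Bool

/-- The vertex `x_k`. -/
def xv (d k : ℕ) : Vtx d := ((k : ZMod d), false)

/-- The vertex `y_k`. -/
def yv (d k : ℕ) : Vtx d := ((k : ZMod d), true)

/-- The antipodal map `α`, sending `x_k ↦ y_k` and `y_k ↦ x_k`. -/
def alphaV (d : ℕ) (v : Vtx d) : Vtx d := (v.1, !v.2)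

/-- The facet `τ_j^k = {y_k, …, y_{k+j-1}} ∪ {x_{k+j}, …, x_{k+d-1}}` of `∂C_d^*`. -/
def tau (d j k : ℕ) : Finset (Vtx d) :=
  (Finset.range d).image fun t => (((k + t : ℕ) : ZMod d), decide (t < j))

/-- The complex `Γ_j` generated by the facets `τ_j^k`, `1 ≤ k ≤ d`. -/
def Gamma (d j : ℕ) : Set (Finset (Vtx d)) :=
  {F | ∃ k, 1 ≤ k ∧ k ≤ d ∧ F ⊆ tau d j k}

/-- The `n`-th facet `σ_n` of `B(1,d)` (indices read periodically mod `2d`):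
`σ_i = {x_1,…,x_i, y_{i+1},…,y_d}` and `σ_{d+i} = {y_1,…,y_i, x_{i+1},…,x_d}`
for `1 ≤ i ≤ d`. -/
def sigB (d n : ℕ) : Finset (Vtx d) :=
  if (n - 1) % (2 * d) + 1 ≤ d then
    (Finset.range d).image fun t =>
      (((t + 1 : ℕ) : ZMod d), decide ((n - 1) % (2 * d) + 1 < t + 1))
  else
    (Finset.range d).image fun t =>
      (((t + 1 : ℕ) : ZMod d), decide (t + 1 ≤ (n - 1) % (2 * d) + 1 - d))

/-- `F` is a facet (an inclusion-maximal face) of the complex `C`. -/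
def IsFacetOf {α : Type*} (C : Set (Finset α)) (F : Finset α) : Prop :=
  F ∈ C ∧ ∀ G ∈ C, F ⊆ G → F = G


section Helpers

variable {d : ℕ} [NeZero d]

lemma cast_val_eq (a : ZMod d) : ((a.val : ℕ) : ZMod d) = a := by
  simp [ZMod.natCast_val, ZMod.cast_id]

lemma mem_tau {j k : ℕ} {a : ZMod d} {b : Bool} :
    (a, b) ∈ tau d j k ↔ b = decide ((a - (k : ZMod d)).val < j) := by
  constructor
  · intro h
    simp only [tau, Finset.mem_image, Finset.mem_range] at h
    obtain ⟨t, ht, heq⟩ := h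
    have h1 : ((k + t : ℕ) : ZMod d) = a := congrArg Prod.fst heq
    have h2 : decide (t < j) = b := congrArg Prod.snd heq
    have hs : a - (k : ZMod d) = (t : ZMod d) := by
      rw [← h1]; push_cast; ring
    rw [hs, ZMod.val_cast_of_lt ht, ← h2]
  · intro hb
    refine Finset.mem_image.2 ⟨(a - (k : ZMod d)).val,
      Finset.mem_range.2 (ZMod.val_lt _), ?_⟩
    have : ((k + (a - (k : ZMod d)).val : ℕ) : ZMod d) = a := by
      push_cast [cast_val_eq]; ring
    rw [this, ← hb]

lemma subset_tau {j k : ℕ} {G : Finset (Vtx d)} :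
    G ⊆ tau d j k ↔ ∀ p ∈ G, p.2 = decide ((p.1 - (k : ZMod d)).val < j) := by
  constructor
  · intro h p hp
    have := h hp
    rw [show p = (p.1, p.2) from rfl, mem_tau] at this
    exact this
  · intro h p hp
    rw [show p = (p.1, p.2) from rfl, mem_tau]
    exact h p hp

lemma yv_mem_tau {j k : ℕ} (hj : 0 < j) : yv d k ∈ tau d j k := by
  rw [yv, mem_tau]; simp [hj]

lemma yv_end_mem_tau {j k : ℕ} (hj : 1 ≤ j) (hjd : j - 1 < d) :
    yv d (k + j - 1) ∈ tau d (j) k := by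
  rw [yv, mem_tau]
  have : ((k + j - 1 : ℕ) : ZMod d) - (k : ZMod d) = ((j - 1 : ℕ) : ZMod d) := by
    have : k + j - 1 = k + (j - 1) := by omega
    rw [this]; push_cast; ring
  rw [this, ZMod.val_cast_of_lt hjd]
  simp; omega

lemma tau_congr {j k k' : ℕ} (h : (k : ZMod d) = (k' : ZMod d)) :
    tau d j k = tau d j k' := by
  ext ⟨a, b⟩; rw [mem_tau, mem_tau, h]

lemma tau_zero (k : ℕ) : tau d 0 k = tau d 0 1 := by
  ext ⟨a, b⟩; rw [mem_tau, mem_tau]; simp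

omit [NeZero d] in
lemma val_sub_natCast {k k' : ℕ} (h : k' ≤ k) :
    ((k : ZMod d) - (k' : ZMod d)).val = (k - k') % d := by
  have : (k : ZMod d) - (k' : ZMod d) = ((k - k' : ℕ) : ZMod d) := by
    rw [Nat.cast_sub h]
  rw [this, ZMod.val_natCast]

lemma containPrev1 {j k : ℕ} {G : Finset (Vtx d)} (hj : 1 ≤ j)
    (hG : G ⊆ tau d j k) (hy : (((k + j - 1 : ℕ) : ZMod d), true) ∉ G) :
    G ⊆ tau d (j - 1) k := by
  rw [subset_tau] at hG ⊢
  intro p hp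
  have hb := hG p hp
  by_cases hcrit : (p.1 - (k : ZMod d)).val = j - 1
  · exfalso
    have h1 : p.1 = ((k + j - 1 : ℕ) : ZMod d) := by
      have hv := cast_val_eq (p.1 - (k : ZMod d))
      rw [hcrit] at hv
      have hk : k + j - 1 = k + (j - 1) := by omega
      rw [hk]; push_cast; rw [hv]; ring
    have h2 : p.2 = true := by rw [hb, decide_eq_true_eq]; omega
    have hpe : p = (((k + j - 1 : ℕ) : ZMod d), true) := by
      rw [Prod.ext_iff]; exact ⟨h1, h2⟩
    exact hy (hpe ▸ hp)
  · rw [hb]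
    rw [decide_eq_decide]
    omega

lemma containPrev2 {j k : ℕ} {G : Finset (Vtx d)} (hj : 1 ≤ j)
    (hG : G ⊆ tau d j k) (hy : (((k : ℕ) : ZMod d), true) ∉ G) :
    G ⊆ tau d (j - 1) (k + 1) := by
  rw [subset_tau] at hG ⊢
  intro p hp
  have hb := hG p hp
  by_cases h0 : (p.1 - (k : ZMod d)).val = 0
  · exfalso
    have h1 : p.1 = (k : ZMod d) :=
      sub_eq_zero.1 ((ZMod.val_eq_zero _).1 h0)
    have h2 : p.2 = true := by rw [hb, h0, decide_eq_true_eq]; omega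
    have hpe : p = (((k : ℕ) : ZMod d), true) := by
      rw [Prod.ext_iff]; exact ⟨h1, h2⟩
    exact hy (hpe ▸ hp)
  · have hval : (p.1 - ((k + 1 : ℕ) : ZMod d)).val = (p.1 - (k : ZMod d)).val - 1 := by
      have h1 : p.1 - ((k + 1 : ℕ) : ZMod d)
          = (((p.1 - (k : ZMod d)).val - 1 : ℕ) : ZMod d) := by
        have hc := cast_val_eq (p.1 - (k : ZMod d))
        have h2 : (((p.1 - (k : ZMod d)).val - 1 : ℕ) : ZMod d)
            = (((p.1 - (k : ZMod d)).val : ℕ) : ZMod d) - 1 := by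
          rw [Nat.cast_sub (by omega)]; norm_num
        rw [h2, hc]; push_cast; ring
      rw [h1, ZMod.val_cast_of_lt]
      have := ZMod.val_lt (p.1 - (k : ZMod d))
      omega
    rw [hval, hb, decide_eq_decide]
    omega

lemma val_sub_one {x : ZMod d} (h : x.val ≠ 0) : (x - 1).val = x.val - 1 := by
  have h1 : x - 1 = ((x.val - 1 : ℕ) : ZMod d) := by
    have h2 : ((x.val - 1 : ℕ) : ZMod d) = ((x.val : ℕ) : ZMod d) - 1 := by
      rw [Nat.cast_sub (by omega)]; norm_num
    rw [h2, cast_val_eq]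
  rw [h1, ZMod.val_cast_of_lt]
  have := ZMod.val_lt x
  omega

omit [NeZero d] in
lemma neg_one_val (hd : 1 ≤ d) : (-1 : ZMod d).val = d - 1 := by
  have h1 : (-1 : ZMod d) = ((d - 1 : ℕ) : ZMod d) := by
    rw [Nat.cast_sub hd, ZMod.natCast_self]; ring
  rw [h1, ZMod.val_cast_of_lt (by omega)]

lemma tau_fun_eq {j j' k k' : ℕ} (h : tau d j k = tau d j' k') (a : ZMod d) :
    decide ((a - (k : ZMod d)).val < j) = decide ((a - (k' : ZMod d)).val < j') := by
  have h1 : (a, decide ((a - (k : ZMod d)).val < j)) ∈ tau d j k := mem_tau.2 rfl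
  rw [h] at h1
  exact mem_tau.1 h1

lemma tau_start_eq {j j' k k' : ℕ} (hj : 1 ≤ j) (hj2 : j ≤ d - 1)
    (hj' : 1 ≤ j') (hd : 1 ≤ d)
    (h : tau d j k = tau d j' k') : (k : ZMod d) = (k' : ZMod d) := by
  have hA := tau_fun_eq h (k : ZMod d)
  rw [sub_self, ZMod.val_zero, decide_eq_true (show 0 < j by omega)] at hA
  have hs : ((k : ZMod d) - (k' : ZMod d)).val < j' := of_decide_eq_true hA.symm
  have hC := tau_fun_eq h ((k : ZMod d) - 1)
  have hm1 : ((k : ZMod d) - 1 - (k : ZMod d)) = (-1 : ZMod d) := by ring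
  rw [hm1, neg_one_val hd] at hC
  have hCfalse : ¬ (d - 1 < j) := by omega
  rw [decide_eq_false hCfalse] at hC
  have hC2 : ¬ (((k : ZMod d) - 1 - (k' : ZMod d)).val < j') := by
    intro hlt
    rw [decide_eq_true hlt] at hC
    exact Bool.false_ne_true hC
  by_contra hne
  have hs0 : ((k : ZMod d) - (k' : ZMod d)).val ≠ 0 := by
    intro h0
    exact hne (sub_eq_zero.1 ((ZMod.val_eq_zero _).1 h0))
  have : ((k : ZMod d) - 1 - (k' : ZMod d)).val
      = ((k : ZMod d) - (k' : ZMod d)).val - 1 := by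
    have hrw : (k : ZMod d) - 1 - (k' : ZMod d) = ((k : ZMod d) - (k' : ZMod d)) - 1 := by
      ring
    rw [hrw, val_sub_one hs0]
  omega

lemma tau_inj {j j' k k' : ℕ} (hj : 1 ≤ j) (hj2 : j ≤ d - 1)
    (hj' : 1 ≤ j') (hj2' : j' ≤ d - 1) (hd : 1 ≤ d)
    (h : tau d j k = tau d j' k') : j = j' ∧ (k : ZMod d) = (k' : ZMod d) := by
  have hk : (k : ZMod d) = (k' : ZMod d) := tau_start_eq hj hj2 hj' hd h
  refine ⟨?_, hk⟩
  have key : ∀ t, t < d → decide (t < j) = decide (t < j') := by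
    intro t ht
    have := tau_fun_eq h ((k : ZMod d) + (t : ℕ))
    rw [← hk] at this
    have hv : ((k : ZMod d) + (t : ℕ) - (k : ZMod d)) = ((t : ℕ) : ZMod d) := by ring
    rw [hv, ZMod.val_cast_of_lt ht] at this
    exact this
  by_contra hne
  rcases lt_or_gt_of_ne hne with hlt | hgt
  · have := key j (by omega)
    simp [hlt] at this
  · have := key j' (by omega)
    simp [hgt] at this

lemma tau_zero_ne {j' k k' : ℕ} (hj' : 1 ≤ j') : tau d 0 k ≠ tau d j' k' := by
  intro h
  have := tau_fun_eq h ((k' : ℕ) : ZMod d)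
  rw [sub_self, ZMod.val_zero] at this
  simp [hj'] at this
  omega

omit [NeZero d] in
lemma block_lt_block {D a b x y : ℕ} (hx : x ≤ D) (hy : 1 ≤ y) (hab : a < b) :
    a * D + x < b * D + y := by
  have h2 : (a + 1) * D ≤ b * D := Nat.mul_le_mul_right _ (by omega)
  have h3 : (a + 1) * D = a * D + D := by ring
  omega

omit [NeZero d] in
lemma block_order {D a b x y : ℕ} (hx1 : 1 ≤ x) (hx2 : x ≤ D) (hy1 : 1 ≤ y) (hy2 : y ≤ D)
    (h : a * D + x < b * D + y) : a < b ∨ (a = b ∧ x < y) := by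
  rcases lt_trichotomy a b with h' | h' | h'
  · exact Or.inl h'
  · subst h'; exact Or.inr ⟨rfl, by omega⟩
  · exfalso
    have h2 : (b + 1) * D ≤ a * D := Nat.mul_le_mul_right _ (by omega)
    have h3 : (b + 1) * D = b * D + D := by ring
    omega

omit [NeZero d] in
lemma decomp {m n : ℕ} (hm : 2 ≤ m) (hn : n ≤ m * (2 * m) + m) :
    n = 0 ∨
    (∃ j k, 1 ≤ j ∧ j ≤ m ∧ 1 ≤ k ∧ k ≤ 2 * m ∧ n = (j - 1) * (2 * m) + k) ∨
    (∃ k, m ≤ k ∧ k ≤ 2 * m - 1 ∧ n = m * (2 * m) + (k - m + 1)) := by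
  rcases Nat.eq_zero_or_pos n with h0 | h0
  · exact Or.inl h0
  rcases le_or_gt n (m * (2 * m)) with h1 | h1
  · refine Or.inr (Or.inl ⟨(n - 1) / (2 * m) + 1, (n - 1) % (2 * m) + 1,
      Nat.le_add_left 1 _, ?_, Nat.le_add_left 1 _, ?_, ?_⟩)
    · have : (n - 1) / (2 * m) < m := by
        rw [Nat.div_lt_iff_lt_mul (by omega)]
        have : m * (2 * m) = 2 * m * m := by ring
        omega
      omega
    · have := Nat.mod_lt (n - 1) (show 0 < 2 * m by omega)
      omega
    · have hdm := Nat.div_add_mod (n - 1) (2 * m)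
      have e1 : (n - 1) / (2 * m) + 1 - 1 = (n - 1) / (2 * m) := Nat.succ_sub_one _
      rw [e1, Nat.mul_comm ((n - 1) / (2 * m)) (2 * m)]
      omega
  · refine Or.inr (Or.inr ⟨n - (m * (2 * m)) - 1 + m, by omega, by omega, by omega⟩)

end Helpers

lemma noEarlier {m : ℕ} (hm : 2 ≤ m) {j k j' k' : ℕ} {G : Finset (Vtx (2 * m))}
    (hj1 : 1 ≤ j) (hj2 : j ≤ m + 1)
    (hy1 : (((k : ℕ) : ZMod (2 * m)), true) ∈ G)
    (hy2 : (((k + j - 1 : ℕ) : ZMod (2 * m)), true) ∈ G)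
    (hear : j' < j ∨ (j' = j ∧ k' < k ∧ k - k' < 2 * m ∧ (j = m + 1 → k - k' < m))) :
    ¬ G ⊆ tau (2 * m) j' k' := by
  haveI : NeZero (2 * m) := ⟨by omega⟩
  intro hsub
  rw [subset_tau] at hsub
  have hA := hsub _ hy1
  have hB := hsub _ hy2
  simp only at hA hB
  have hs : (((k : ℕ) : ZMod (2 * m)) - ((k' : ℕ) : ZMod (2 * m))).val < j' :=
    of_decide_eq_true hA.symm
  set s := (((k : ℕ) : ZMod (2 * m)) - ((k' : ℕ) : ZMod (2 * m))).val with hsdef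
  have hslt : s < 2 * m := ZMod.val_lt _
  have hBval : (((k + j - 1 : ℕ) : ZMod (2 * m)) - ((k' : ℕ) : ZMod (2 * m))).val
      = (s + (j - 1)) % (2 * m) := by
    have h1 : ((k + j - 1 : ℕ) : ZMod (2 * m)) - ((k' : ℕ) : ZMod (2 * m))
        = (((k : ℕ) : ZMod (2 * m)) - ((k' : ℕ) : ZMod (2 * m))) + ((j - 1 : ℕ) : ZMod (2 * m)) := by
      have hk : k + j - 1 = k + (j - 1) := by omega
      rw [hk]; push_cast; ring
    rw [h1, ZMod.val_add, ZMod.val_cast_of_lt (show j - 1 < 2 * m by omega), hsdef]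
  have hB2 : (s + (j - 1)) % (2 * m) < j' := by
    rw [← hBval]
    exact of_decide_eq_true hB.symm
  have hj'j : j' ≤ j := by rcases hear with h | ⟨h, _⟩ <;> omega
  rcases Nat.lt_or_ge (s + (j - 1)) (2 * m) with hcase | hcase
  · rw [Nat.mod_eq_of_lt hcase] at hB2
    -- s + j - 1 < j' ≤ j forces s = 0 and j' = j
    have hs0 : s = 0 ∧ j' = j := by omega
    rcases hear with h | ⟨_, hk, hkd, _⟩
    · omega
    · have : s = (k - k') % (2 * m) := val_sub_natCast (by omega)
      rw [Nat.mod_eq_of_lt hkd] at this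
      omega
  · rw [Nat.mod_eq_sub_mod hcase,
      Nat.mod_eq_of_lt (show s + (j - 1) - 2 * m < 2 * m by omega)] at hB2
    -- forces s = m, j = j' = m + 1
    have hkey : s = m ∧ j = m + 1 ∧ j' = m + 1 := by omega
    rcases hear with h | ⟨_, hk, hkd, hkm⟩
    · omega
    · have : s = (k - k') % (2 * m) := val_sub_natCast (by omega)
      rw [Nat.mod_eq_of_lt hkd] at this
      have := hkm (by omega)
      omega

lemma central {m : ℕ} (hm : 2 ≤ m) (F : ℕ → Finset (Vtx (2 * m)))
    (hF0 : F 0 = tau (2 * m) 0 1)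
    (hFjk : ∀ j k, 1 ≤ j → j ≤ m → 1 ≤ k → k ≤ 2 * m →
      F ((j - 1) * (2 * m) + k) = tau (2 * m) j k)
    (hFext : ∀ k, m ≤ k → k ≤ 2 * m - 1 →
      F (m * (2 * m) + (k - m + 1)) = tau (2 * m) (m + 1) k)
    {j k n : ℕ} (hj1 : 1 ≤ j)
    (hreg : (j ≤ m ∧ 1 ≤ k ∧ k ≤ 2 * m ∧ n = (j - 1) * (2 * m) + k) ∨
            (j = m + 1 ∧ m ≤ k ∧ k ≤ 2 * m - 1 ∧ n = m * (2 * m) + (k - m + 1)))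
    {G : Finset (Vtx (2 * m))} (hG : G ⊆ tau (2 * m) j k) :
    (∃ l, l < n ∧ G ⊆ F l) ↔
      ¬ (({yv (2 * m) k, yv (2 * m) (k + j - 1)} : Finset (Vtx (2 * m))) ⊆ G) := by
  haveI : NeZero (2 * m) := ⟨by omega⟩
  have hj2 : j ≤ m + 1 := by rcases hreg with ⟨h, _⟩ | ⟨h, _⟩ <;> omega
  have hpair : ({yv (2 * m) k, yv (2 * m) (k + j - 1)} : Finset (Vtx (2 * m))) ⊆ G ↔
      yv (2 * m) k ∈ G ∧ yv (2 * m) (k + j - 1) ∈ G := by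
    rw [Finset.insert_subset_iff, Finset.singleton_subset_iff]
  have hmm : (m - 1) * (2 * m) + 2 * m = m * (2 * m) := by
    have h3 : (m - 1 + 1) * (2 * m) = (m - 1) * (2 * m) + 2 * m := by ring
    rw [← h3]; congr 1; omega
  constructor
  · rintro ⟨l, hl, hGl⟩ hsubpair
    rw [hpair] at hsubpair
    obtain ⟨hy1, hy2⟩ := hsubpair
    have hln : l ≤ m * (2 * m) + m := by
      have hnb : n ≤ m * (2 * m) + m := by
        rcases hreg with ⟨hjm, hk1, hk2, hne⟩ | ⟨hjm, hk1, hk2, hne⟩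
        · have h1 : (j - 1) * (2 * m) ≤ (m - 1) * (2 * m) :=
            Nat.mul_le_mul_right _ (by omega)
          omega
        · omega
      omega
    rcases decomp hm hln with h0 | ⟨j', k', hj'1, hj'2, hk'1, hk'2, hle⟩ |
      ⟨k', hk'1, hk'2, hle⟩
    · subst h0
      rw [hF0] at hGl
      exact noEarlier hm hj1 hj2 hy1 hy2 (Or.inl (by omega)) hGl
    · subst hle
      rw [hFjk j' k' hj'1 hj'2 hk'1 hk'2] at hGl
      refine noEarlier hm hj1 hj2 hy1 hy2 ?_ hGl
      rcases hreg with ⟨hjm, hk1, hk2, hne⟩ | ⟨hjm, hk1, hk2, hne⟩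
      · subst hne
        rcases block_order hk'1 hk'2 hk1 hk2 hl with hlt | ⟨heq, hklt⟩
        · left; omega
        · right
          exact ⟨by omega, hklt, by omega, by omega⟩
      · left; omega
    · subst hle
      rw [hFext k' hk'1 hk'2] at hGl
      refine noEarlier hm hj1 hj2 hy1 hy2 ?_ hGl
      rcases hreg with ⟨hjm, hk1, hk2, hne⟩ | ⟨hjm, hk1, hk2, hne⟩
      · exfalso
        have h1 : (j - 1) * (2 * m) ≤ (m - 1) * (2 * m) :=
          Nat.mul_le_mul_right _ (by omega)
        omega
      · right
        exact ⟨by omega, by omega, by omega, fun _ => by omega⟩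
  · intro hnot
    rw [hpair] at hnot
    by_cases hy2 : yv (2 * m) (k + j - 1) ∈ G
    · have hy1 : yv (2 * m) k ∉ G := fun h => hnot ⟨h, hy2⟩
      have hsub : G ⊆ tau (2 * m) (j - 1) (k + 1) := containPrev2 hj1 hG hy1
      rcases Nat.lt_or_ge j 2 with hj1' | hj1'
      · obtain rfl : j = 1 := by omega
        refine ⟨0, ?_, ?_⟩
        · rcases hreg with ⟨_, hk1, _, hne⟩ | ⟨hjm, _, _, _⟩
          · omega
          · omega
        · rw [hF0, ← tau_zero (k + 1)]
          exact hsub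
      · rcases hreg with ⟨hjm, hk1, hk2, hne⟩ | ⟨hjm, hk1, hk2, hne⟩
        · by_cases hkd : k = 2 * m
          · refine ⟨(j - 2) * (2 * m) + 1, ?_, ?_⟩
            · rw [hne]
              exact block_lt_block (by omega) (by omega) (by omega)
            · have hF := hFjk (j - 1) 1 (by omega) (by omega) le_rfl (by omega)
              have e : j - 1 - 1 = j - 2 := by omega
              rw [e] at hF
              rw [hF]
              have hc : ((k + 1 : ℕ) : ZMod (2 * m)) = ((1 : ℕ) : ZMod (2 * m)) := by
                subst hkd
                rw [Nat.cast_add, ZMod.natCast_self]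
                simp
              rw [← tau_congr hc]
              exact hsub
          · refine ⟨(j - 2) * (2 * m) + (k + 1), ?_, ?_⟩
            · rw [hne]
              exact block_lt_block (by omega) (by omega) (by omega)
            · have hF := hFjk (j - 1) (k + 1) (by omega) (by omega) (by omega) (by omega)
              have e : j - 1 - 1 = j - 2 := by omega
              rw [e] at hF
              rw [hF]
              exact hsub
        · refine ⟨(m - 1) * (2 * m) + (k + 1), ?_, ?_⟩
          · rw [hne]
            exact block_lt_block (by omega) (by omega) (by omega)
          · have hF := hFjk m (k + 1) (by omega) le_rfl (by omega) (by omega)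
            have e : m - 1 = m - 1 := rfl
            rw [hF]
            have e2 : j - 1 = m := by omega
            rw [e2] at hsub
            exact hsub
    · have hsub : G ⊆ tau (2 * m) (j - 1) k := containPrev1 hj1 hG hy2
      rcases Nat.lt_or_ge j 2 with hj1' | hj1'
      · obtain rfl : j = 1 := by omega
        refine ⟨0, ?_, ?_⟩
        · rcases hreg with ⟨_, hk1, _, hne⟩ | ⟨hjm, _, _, _⟩
          · omega
          · omega
        · rw [hF0, ← tau_zero k]
          exact hsub
      · rcases hreg with ⟨hjm, hk1, hk2, hne⟩ | ⟨hjm, hk1, hk2, hne⟩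
        · refine ⟨(j - 2) * (2 * m) + k, ?_, ?_⟩
          · rw [hne]
            exact block_lt_block (by omega) (by omega) (by omega)
          · have hF := hFjk (j - 1) k (by omega) (by omega) (by omega) (by omega)
            have e : j - 1 - 1 = j - 2 := by omega
            rw [e] at hF
            rw [hF]
            exact hsub
        · refine ⟨(m - 1) * (2 * m) + k, ?_, ?_⟩
          · rw [hne]
            exact block_lt_block (by omega) (by omega) (by omega)
          · have hF := hFjk m k (by omega) le_rfl (by omega) (by omega)
            rw [hF]
            have e2 : j - 1 = m := by omega
            rw [e2] at hsub
            exact hsub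

lemma cast_inj_of_close {d k k' : ℕ} [NeZero d]
    (h : (k : ZMod d) = (k' : ZMod d)) (h1 : k - k' < d) (h2 : k' - k < d) : k = k' := by
  rcases le_total k' k with hle | hle
  · have hv := val_sub_natCast (d := d) hle
    rw [h, sub_self, ZMod.val_zero] at hv
    rw [Nat.mod_eq_of_lt h1] at hv
    omega
  · have hv := val_sub_natCast (d := d) hle
    rw [h, sub_self, ZMod.val_zero] at hv
    rw [Nat.mod_eq_of_lt h2] at hv
    omega

theorem statement2' (m : ℕ) (hm : 2 ≤ m)
    (F : ℕ → Finset (Vtx (2 * m)))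
    (hF0 : F 0 = tau (2 * m) 0 1)
    (hFjk : ∀ j k, 1 ≤ j → j ≤ m → 1 ≤ k → k ≤ 2 * m →
      F ((j - 1) * (2 * m) + k) = tau (2 * m) j k)
    (hFext : ∀ k, m ≤ k → k ≤ 2 * m - 1 →
      F (m * (2 * m) + (k - m + 1)) = tau (2 * m) (m + 1) k) :
    ((({G | ∃ j ≤ m, G ∈ Gamma (2 * m) j} ∪
        {G | ∃ k, m ≤ k ∧ k ≤ 2 * m - 1 ∧ G ⊆ tau (2 * m) (m + 1) k}) :
          Set (Finset (Vtx (2 * m)))) =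
        {G | ∃ n ≤ m * (2 * m) + m, G ⊆ F n}) ∧
    (∀ a b, a ≤ m * (2 * m) + m → b ≤ m * (2 * m) + m → F a = F b → a = b) ∧
    (∀ n, 1 ≤ n → n ≤ m * (2 * m) + m →
      ∃ r : Finset (Vtx (2 * m)), r ⊆ F n ∧
        ∀ G : Finset (Vtx (2 * m)),
          (G ⊆ F n ∧ ∀ l < n, ¬ G ⊆ F l) ↔ (r ⊆ G ∧ G ⊆ F n)) ∧
    (∀ k, m ≤ k → k ≤ 2 * m - 1 → ∀ G ⊆ tau (2 * m) (m + 1) k,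
      ((∃ l, l < m * (2 * m) + (k - m + 1) ∧ G ⊆ F l) ↔
        ¬ (({yv (2 * m) k, yv (2 * m) (k + m)} : Finset (Vtx (2 * m))) ⊆ G))) := by
  haveI : NeZero (2 * m) := ⟨by omega⟩
  have hmm : (m - 1) * (2 * m) + 2 * m = m * (2 * m) := by
    have h3 : (m - 1 + 1) * (2 * m) = (m - 1) * (2 * m) + 2 * m := by ring
    rw [← h3]; congr 1; omega
  have hmlt : m + 1 ≤ 2 * m - 1 := by omega
  refine ⟨?_, ?_, ?_, ?_⟩
  · -- set equality
    ext G
    simp only [Set.mem_union, Set.mem_setOf_eq, Gamma]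
    constructor
    · rintro (⟨j, hj, k, hk1, hk2, hGk⟩ | ⟨k, hk1, hk2, hGk⟩)
      · rcases Nat.eq_zero_or_pos j with rfl | hj1
        · exact ⟨0, by omega, by rw [hF0, ← tau_zero k]; exact hGk⟩
        · refine ⟨(j - 1) * (2 * m) + k, ?_, ?_⟩
          · have h1 : (j - 1) * (2 * m) ≤ (m - 1) * (2 * m) :=
              Nat.mul_le_mul_right _ (by omega)
            omega
          · rw [hFjk j k hj1 hj hk1 hk2]; exact hGk
      · exact ⟨m * (2 * m) + (k - m + 1), by omega, by rw [hFext k hk1 hk2]; exact hGk⟩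
    · rintro ⟨n, hn, hGn⟩
      rcases decomp hm hn with h0 | ⟨j, k, hj1, hj2, hk1, hk2, hne⟩ | ⟨k, hk1, hk2, hne⟩
      · subst h0
        rw [hF0] at hGn
        exact Or.inl ⟨0, by omega, 1, le_rfl, by omega, hGn⟩
      · subst hne
        rw [hFjk j k hj1 hj2 hk1 hk2] at hGn
        exact Or.inl ⟨j, hj2, k, hk1, hk2, hGn⟩
      · subst hne
        rw [hFext k hk1 hk2] at hGn
        exact Or.inr ⟨k, hk1, hk2, hGn⟩
  · -- no repetitions
    intro a b ha hb hab
    rcases decomp hm ha with h0 | ⟨j, k, hj1, hj2, hk1, hk2, hne⟩ | ⟨k, hk1, hk2, hne⟩ <;>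
      rcases decomp hm hb with h0' | ⟨j', k', hj'1, hj'2, hk'1, hk'2, hne'⟩ |
        ⟨k', hk'1, hk'2, hne'⟩
    · omega
    · exfalso
      subst h0; subst hne'
      rw [hF0, hFjk j' k' hj'1 hj'2 hk'1 hk'2] at hab
      exact tau_zero_ne hj'1 hab
    · exfalso
      subst h0; subst hne'
      rw [hF0, hFext k' hk'1 hk'2] at hab
      exact tau_zero_ne (by omega) hab
    · exfalso
      subst h0'; subst hne
      rw [hF0, hFjk j k hj1 hj2 hk1 hk2] at hab
      exact tau_zero_ne hj1 hab.symm
    · subst hne; subst hne'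
      rw [hFjk j k hj1 hj2 hk1 hk2, hFjk j' k' hj'1 hj'2 hk'1 hk'2] at hab
      obtain ⟨hjj, hkk⟩ := tau_inj (d := 2 * m) hj1 (by omega) hj'1 (by omega) (by omega) hab
      have : k = k' := cast_inj_of_close hkk (by omega) (by omega)
      subst hjj; subst this; rfl
    · exfalso
      subst hne; subst hne'
      rw [hFjk j k hj1 hj2 hk1 hk2, hFext k' hk'1 hk'2] at hab
      obtain ⟨hjj, _⟩ := tau_inj (d := 2 * m) hj1 (by omega) (by omega) (by omega) (by omega) hab
      omega
    · exfalso
      subst h0'; subst hne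
      rw [hF0, hFext k hk1 hk2] at hab
      exact tau_zero_ne (by omega) hab.symm
    · exfalso
      subst hne; subst hne'
      rw [hFext k hk1 hk2, hFjk j' k' hj'1 hj'2 hk'1 hk'2] at hab
      obtain ⟨hjj, _⟩ := tau_inj (d := 2 * m) (by omega) (by omega) hj'1 (by omega) (by omega) hab
      omega
    · subst hne; subst hne'
      rw [hFext k hk1 hk2, hFext k' hk'1 hk'2] at hab
      obtain ⟨_, hkk⟩ := tau_inj (d := 2 * m) (by omega) (by omega) (by omega) (by omega)
        (by omega) hab
      have : k = k' := cast_inj_of_close hkk (by omega) (by omega)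
      subst this; rfl
  · -- shelling condition
    intro n hn1 hn2
    rcases decomp hm hn2 with h0 | ⟨j, k, hj1, hj2, hk1, hk2, hne⟩ | ⟨k, hk1, hk2, hne⟩
    · omega
    · have hFn : F n = tau (2 * m) j k := by rw [hne]; exact hFjk j k hj1 hj2 hk1 hk2
      refine ⟨{yv (2 * m) k, yv (2 * m) (k + j - 1)}, ?_, ?_⟩
      · rw [hFn, Finset.insert_subset_iff, Finset.singleton_subset_iff]
        exact ⟨yv_mem_tau (by omega), yv_end_mem_tau hj1 (by omega)⟩
      · intro G
        constructor
        · rintro ⟨hGn, hfresh⟩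
          refine ⟨?_, hGn⟩
          by_contra hnr
          obtain ⟨l, hl, hGl⟩ := (central hm F hF0 hFjk hFext hj1
            (Or.inl ⟨hj2, hk1, hk2, hne⟩) (hFn ▸ hGn)).2 hnr
          exact hfresh l hl hGl
        · rintro ⟨hr, hGn⟩
          refine ⟨hGn, fun l hl hGl => ?_⟩
          exact (central hm F hF0 hFjk hFext hj1
            (Or.inl ⟨hj2, hk1, hk2, hne⟩) (hFn ▸ hGn)).1 ⟨l, hl, hGl⟩ hr
    · have hFn : F n = tau (2 * m) (m + 1) k := by rw [hne]; exact hFext k hk1 hk2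
      refine ⟨{yv (2 * m) k, yv (2 * m) (k + (m + 1) - 1)}, ?_, ?_⟩
      · rw [hFn, Finset.insert_subset_iff, Finset.singleton_subset_iff]
        exact ⟨yv_mem_tau (by omega), yv_end_mem_tau (by omega) (by omega)⟩
      · intro G
        constructor
        · rintro ⟨hGn, hfresh⟩
          refine ⟨?_, hGn⟩
          by_contra hnr
          obtain ⟨l, hl, hGl⟩ := (central hm F hF0 hFjk hFext (by omega)
            (Or.inr ⟨rfl, hk1, hk2, hne⟩) (hFn ▸ hGn)).2 hnr
          exact hfresh l hl hGl
        · rintro ⟨hr, hGn⟩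
          refine ⟨hGn, fun l hl hGl => ?_⟩
          exact (central hm F hF0 hFjk hFext (by omega)
            (Or.inr ⟨rfl, hk1, hk2, hne⟩) (hFn ▸ hGn)).1 ⟨l, hl, hGl⟩ hr
  · -- restriction face for appended facets
    intro k hk1 hk2 G hG
    have hcen := central hm F hF0 hFjk hFext (show 1 ≤ m + 1 by omega)
      (Or.inr ⟨rfl, hk1, hk2, rfl⟩) hG
    have e : k + (m + 1) - 1 = k + m := by omega
    rw [e] at hcen
    exact hcen

/-- Let `d = 2m` be even, `d ≥ 4`, and let `-γ` be the complex generated by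
`τ_{m+1}^k`, `m ≤ k ≤ d-1`. Then `(⋃_{k=0}^{m} Γ_k) ∪ (-γ)` is shellable: appending the
facets `τ_{m+1}^m, …, τ_{m+1}^{d-1}` (in this order) to the shelling order
`τ_0, τ_1^1, …, τ_1^d, …, τ_m^1, …, τ_m^d` of `⋃_{k=0}^{m} Γ_k` gives a shelling, where for
`m ≤ k ≤ d-1` a face `G ⊆ τ_{m+1}^k` is contained in an earlier facet of the list if and
only if `{y_k, y_{k+m}} ⊄ G`. The full list is encoded by `F : ℕ → Finset (Vtx (2m))`. -/
theorem statement2 (m : ℕ) (hm : 2 ≤ m)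
    (F : ℕ → Finset (Vtx (2 * m)))
    (hF0 : F 0 = tau (2 * m) 0 1)
    (hFjk : ∀ j k, 1 ≤ j → j ≤ m → 1 ≤ k → k ≤ 2 * m →
      F ((j - 1) * (2 * m) + k) = tau (2 * m) j k)
    (hFext : ∀ k, m ≤ k → k ≤ 2 * m - 1 →
      F (m * (2 * m) + (k - m + 1)) = tau (2 * m) (m + 1) k) :
    -- the listed facets generate exactly the complex `(⋃_{k=0}^{m} Γ_k) ∪ (-γ)`,
    ((({G | ∃ j ≤ m, G ∈ Gamma (2 * m) j} ∪
        {G | ∃ k, m ≤ k ∧ k ≤ 2 * m - 1 ∧ G ⊆ tau (2 * m) (m + 1) k}) :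
          Set (Finset (Vtx (2 * m)))) =
        {G | ∃ n ≤ m * (2 * m) + m, G ⊆ F n}) ∧
    -- they are listed without repetition,
    (∀ a b, a ≤ m * (2 * m) + m → b ≤ m * (2 * m) + m → F a = F b → a = b) ∧
    -- the listed ordering satisfies the shelling condition,
    (∀ n, 1 ≤ n → n ≤ m * (2 * m) + m →
      ∃ r : Finset (Vtx (2 * m)), r ⊆ F n ∧
        ∀ G : Finset (Vtx (2 * m)),
          (G ⊆ F n ∧ ∀ l < n, ¬ G ⊆ F l) ↔ (r ⊆ G ∧ G ⊆ F n)) ∧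
    -- and for the appended facets the restriction face is `{y_k, y_{k+m}}`.
    (∀ k, m ≤ k → k ≤ 2 * m - 1 → ∀ G ⊆ tau (2 * m) (m + 1) k,
      ((∃ l, l < m * (2 * m) + (k - m + 1) ∧ G ⊆ F l) ↔
        ¬ (({yv (2 * m) k, yv (2 * m) (k + m)} : Finset (Vtx (2 * m))) ⊆ G))) := by
  exact statement2' m hm F hF0 hFjk hFext

end SpherePaper
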